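/- arXiv:2509.25895 — 3 statements merged into one kernel-verified Lean document; each statement's English description precedes it below -/
import Mathlib

section
/- Let G(t) = (V, E(t)), t ∈ ℕ₀, be a time-varying undirected graph on n vertices with self-loops, and suppose there is a partition 0 = τ₀ < τ₁ < ⋯ such that for each l the graphs G(τ_l), …, G(τ_{l+1} − 1) are jointly connected (their union is connected). Set t_k = τ_{k(n−1)}. Then for every pair of vertices i, j and every k ∈ ℕ₀, i meets j on [t_k, t_{k+1}]. -/
/-- `MeetsE E i j m₁ m₂` : there is a sequence `l` with `l m₁ = i`, `l m₂ = j` such that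
for every `s ∈ [m₁, m₂ - 1]`, `l s` and `l (s+1)` are adjacent at time `s`
(i.e. `l s ∈ N_{l (s+1)}(s)`). -/
def MeetsE {n : ℕ} (E : ℕ → Fin n → Fin n → Prop) (i j : Fin n) (m₁ m₂ : ℕ) : Prop :=
  ∃ l : ℕ → Fin n, l m₁ = i ∧ l m₂ = j ∧ ∀ s, m₁ ≤ s → s < m₂ → E s (l s) (l (s + 1))

lemma meetsE_refl {n : ℕ} (E : ℕ → Fin n → Fin n → Prop) (i : Fin n) (m : ℕ) :
    MeetsE E i i m m :=
  ⟨fun _ => i, rfl, rfl, fun s h1 h2 => absurd (h1.trans_lt h2) (lt_irrefl _)⟩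

lemma meetsE_extend {n : ℕ} {E : ℕ → Fin n → Fin n → Prop}
    (hself : ∀ t a, E t a a) {i j : Fin n} {m₁ m₂ m₃ : ℕ}
    (h : MeetsE E i j m₁ m₂) (h12 : m₁ ≤ m₂) (h23 : m₂ ≤ m₃) :
    MeetsE E i j m₁ m₃ := by
  obtain ⟨l, hl1, hl2, hl⟩ := h
  refine ⟨fun s => if s ≤ m₂ then l s else j, by simp [h12, hl1], ?_, ?_⟩
  · by_cases h : m₃ ≤ m₂
    · have : m₂ = m₃ := le_antisymm h23 h
      subst this; simp [hl2]
    · simp [h]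
  · intro s hs1 hs2
    by_cases h : s + 1 ≤ m₂
    · have hs : s ≤ m₂ := by omega
      simpa [h, hs] using hl s hs1 (by omega)
    · by_cases h' : s ≤ m₂
      · have : s = m₂ := by omega
        simp [h, h', this, hl2, hself]
      · simp [h, h', hself]

lemma meetsE_step {n : ℕ} {E : ℕ → Fin n → Fin n → Prop}
    {i j y : Fin n} {m₁ t : ℕ}
    (h : MeetsE E i j m₁ t) (h1 : m₁ ≤ t) (hE : E t j y) :
    MeetsE E i y m₁ (t + 1) := by
  obtain ⟨l, hl1, hl2, hl⟩ := h
  refine ⟨fun s => if s ≤ t then l s else y, by simp [h1, hl1], by simp, ?_⟩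
  intro s hs1 hs2
  by_cases h' : s + 1 ≤ t
  · have hs : s ≤ t := by omega
    simpa [h', hs] using hl s hs1 (by omega)
  · have hst : s = t := by omega
    simp [h', hst, hl2, hE]

lemma cross_of_reflTransGen {α : Type*} {r : α → α → Prop} {P : α → Prop} {a b : α}
    (h : Relation.ReflTransGen r a b) (ha : P a) (hb : ¬ P b) :
    ∃ x y, P x ∧ ¬ P y ∧ r x y := by
  induction h with
  | refl => exact absurd ha hb
  | @tail c d h₁ h₂ ih =>
    by_cases hc : P c
    · exact ⟨c, d, hc, hb, h₂⟩
    · exact ih hc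

theorem stmt_10 {n : ℕ} (hn : 1 ≤ n) (E : ℕ → Fin n → Fin n → Prop)
    (hsymm : ∀ (t : ℕ) (a b : Fin n), E t a b → E t b a)
    (hself : ∀ (t : ℕ) (a : Fin n), E t a a)
    (τ : ℕ → ℕ) (hτ0 : τ 0 = 0) (hτ : StrictMono τ)
    (hconn : ∀ l : ℕ, ∀ a b : Fin n,
      Relation.ReflTransGen (fun x y => ∃ t, τ l ≤ t ∧ t < τ (l + 1) ∧ E t x y) a b) :
    ∀ (k : ℕ) (i j : Fin n),
      MeetsE E i j (τ (k * (n - 1))) (τ ((k + 1) * (n - 1))) := by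
  intro k i j
  classical
  set a := k * (n - 1) with ha
  set S : ℕ → Finset (Fin n) :=
    fun m => Finset.univ.filter (fun j => MeetsE E i j (τ a) (τ (a + m))) with hS
  have hmem : ∀ m j, j ∈ S m ↔ MeetsE E i j (τ a) (τ (a + m)) := by
    intro m j; simp [hS]
  have hmono : ∀ m, S m ⊆ S (m + 1) := by
    intro m x hx
    rw [hmem] at hx ⊢
    exact meetsE_extend hself hx (hτ.monotone (by omega)) (hτ.monotone (by omega))
  have hcard : ∀ m, min n (m + 1) ≤ (S m).card := by
    intro m
    induction m with
    | zero =>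
      have : i ∈ S 0 := by rw [hmem]; simpa using meetsE_refl E i (τ a)
      have := Finset.card_pos.mpr ⟨i, this⟩
      omega
    | succ m ih =>
      by_cases hfull : S m = Finset.univ
      · have : (S (m + 1)).card = n := by
          have : S (m + 1) = Finset.univ :=
            Finset.eq_univ_of_card _ (le_antisymm (Finset.card_le_univ _)
              (by rw [← Finset.card_univ, ← hfull]; exact Finset.card_le_card (hmono m)))
          simp [this]
        omega
      · obtain ⟨b, hb⟩ : ∃ b, b ∉ S m := by
          by_contra h
          push_neg at h
          exact hfull (Finset.eq_univ_iff_forall.mpr h)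
        have hi : i ∈ S m := by
          rw [hmem]
          exact meetsE_extend hself (meetsE_refl E i (τ a)) le_rfl (hτ.monotone (by omega))
        obtain ⟨x, y, hx, hy, t, ht1, ht2, hE⟩ :=
          cross_of_reflTransGen (P := fun z => z ∈ S m) (hconn (a + m) i b) hi hb
        rw [hmem] at hx
        have h1 : MeetsE E i x (τ a) t :=
          meetsE_extend hself hx (hτ.monotone (by omega)) ht1
        have h2 : MeetsE E i y (τ a) (t + 1) :=
          meetsE_step h1 (le_trans (hτ.monotone (by omega)) ht1) hE
        have hy' : y ∈ S (m + 1) := by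
          rw [hmem]
          refine meetsE_extend hself h2 ?_ ht2
          have := hτ.monotone (show a ≤ a + m by omega)
          omega
        have hsub : insert y (S m) ⊆ S (m + 1) := by
          intro z hz
          rcases Finset.mem_insert.mp hz with h | h
          · exact h ▸ hy'
          · exact hmono m h
        have : (S m).card + 1 ≤ (S (m + 1)).card := by
          have := Finset.card_le_card hsub
          rwa [Finset.card_insert_of_notMem hy] at this
        have hlt : (S m).card < n := by
          have := Finset.card_le_univ (S m)
          rcases lt_or_eq_of_le this with h | h
          · simpa using h
          · exact absurd (Finset.eq_univ_of_card _ (by simpa using h)) hfull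
        omega
  have hfin : j ∈ S (n - 1) := by
    have h1 := hcard (n - 1)
    have h2 : min n (n - 1 + 1) = n := by omega
    rw [h2] at h1
    have : S (n - 1) = Finset.univ :=
      Finset.eq_univ_of_card _ (le_antisymm (Finset.card_le_univ _) (by simpa using h1))
    simp [this]
  rw [hmem] at hfin
  have : a + (n - 1) = (k + 1) * (n - 1) := by rw [ha]; ring
  rwa [this] at hfin
end

section
/- Let G(t) be a time-varying graph on vertex set V = {1,…,n} with self loops, and suppose the graphs G(τ_l), …, G(τ_{l+1}−1) are jointly connected. For a fixed vertex i, define V_s = { p ∈ V : i meets p on [0, s] } and V_0 = {i}. Then for every l ∈ ℕ₀: if V \ V_{τ_l} ≠ ∅, then V_{τ_l} ⊊ V_{τ_{l+1}}. Consequently, V_{τ_{n−1}} = V. -/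
lemma meets_mono {n : ℕ} (E : ℕ → Fin n → Fin n → Prop)
    (hself : ∀ (t : ℕ) (a : Fin n), E t a a) {i p : Fin n} {s t : ℕ}
    (h : MeetsE E i p 0 s) (hst : s ≤ t) : MeetsE E i p 0 t := by
  obtain ⟨l, h0, hs, he⟩ := h
  refine ⟨fun r => if r ≤ s then l r else p, ?_, ?_, ?_⟩
  · simp [h0]
  · by_cases h' : t ≤ s
    · have : t = s := le_antisymm h' hst
      simp [this, hs]
    · simp [h']
  · intro r _ hrt
    dsimp only
    split_ifs with h2 h1 h1
    · exact he r (Nat.zero_le _) (by omega)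
    · have hrs : r = s := by omega
      rw [hrs, hs]
      exact hself _ _
    · omega
    · exact hself _ _

lemma meets_step {n : ℕ} (E : ℕ → Fin n → Fin n → Prop)
    (hself : ∀ (t : ℕ) (a : Fin n), E t a a) {i x y : Fin n} {s t : ℕ}
    (h : MeetsE E i x 0 s) (hst : s ≤ t) (he : E t x y) :
    MeetsE E i y 0 (t + 1) := by
  obtain ⟨l, h0, hs, hedge⟩ := meets_mono E hself h hst
  refine ⟨fun r => if r ≤ t then l r else y, ?_, ?_, ?_⟩
  · simp [h0]
  · simp
  · intro r _ hrt
    dsimp only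
    split_ifs with h2 h1 h1
    · exact hedge r (Nat.zero_le _) (by omega)
    · have hrs : r = t := by omega
      rw [hrs, hs]
      exact he
    · omega
    · omega

theorem stmt_11 {n : ℕ} (hn : 1 ≤ n) (E : ℕ → Fin n → Fin n → Prop)
    (hsymm : ∀ (t : ℕ) (a b : Fin n), E t a b → E t b a)
    (hself : ∀ (t : ℕ) (a : Fin n), E t a a)
    (τ : ℕ → ℕ) (hτ0 : τ 0 = 0) (hτ : StrictMono τ)
    (hconn : ∀ l : ℕ, ∀ a b : Fin n,
      Relation.ReflTransGen (fun x y => ∃ t, τ l ≤ t ∧ t < τ (l + 1) ∧ E t x y) a b)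
    (i : Fin n) (Vs : ℕ → Set (Fin n)) (hVs : ∀ s, Vs s = {p | MeetsE E i p 0 s}) :
    (∀ l : ℕ, ((Set.univ : Set (Fin n)) \ Vs (τ l)).Nonempty → Vs (τ l) ⊂ Vs (τ (l + 1))) ∧
    Vs (τ (n - 1)) = Set.univ := by
  have hVmono : ∀ s t : ℕ, s ≤ t → Vs s ⊆ Vs t := by
    intro s t hst p hp
    rw [hVs] at hp ⊢
    exact meets_mono E hself hp hst
  have hi : ∀ s, i ∈ Vs s := by
    intro s
    rw [hVs]
    exact meets_mono E hself ⟨fun _ => i, rfl, rfl, by omega⟩ (Nat.zero_le s)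
  have hstep : ∀ l : ℕ, ((Set.univ : Set (Fin n)) \ Vs (τ l)).Nonempty →
      Vs (τ l) ⊂ Vs (τ (l + 1)) := by
    intro l hne
    obtain ⟨b, hb⟩ := hne
    have hb' : b ∉ Vs (τ l) := hb.2
    have key : ∀ c : Fin n,
        Relation.ReflTransGen (fun x y => ∃ t, τ l ≤ t ∧ t < τ (l + 1) ∧ E t x y) i c →
        c ∈ Vs (τ l) ∨ ∃ y, y ∉ Vs (τ l) ∧ y ∈ Vs (τ (l + 1)) := by
      intro c hc
      induction hc with
      | refl => exact Or.inl (hi _)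
      | @tail b' c' h1 h2 ih =>
        rcases ih with hbV | hy
        · obtain ⟨t, ht1, ht2, hE⟩ := h2
          have hc' : c' ∈ Vs (t + 1) := by
            rw [hVs] at hbV ⊢
            exact meets_step E hself hbV ht1 hE
          have hc'' : c' ∈ Vs (τ (l + 1)) := hVmono _ _ (by omega) hc'
          by_cases hcl : c' ∈ Vs (τ l)
          · exact Or.inl hcl
          · exact Or.inr ⟨c', hcl, hc''⟩
        · exact Or.inr hy
    rcases key b (hconn l i b) with h | ⟨y, hy1, hy2⟩
    · exact absurd h hb'
    · have hsub : Vs (τ l) ⊆ Vs (τ (l + 1)) :=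
        hVmono _ _ (le_of_lt (hτ (lt_add_one l)))
      exact (Set.ssubset_iff_of_subset hsub).2 ⟨y, hy2, hy1⟩
  refine ⟨hstep, ?_⟩
  have hcard : ∀ l : ℕ, Vs (τ l) = Set.univ ∨ l + 1 ≤ (Vs (τ l)).ncard := by
    intro l
    induction l with
    | zero =>
      right
      have h0 : Vs (τ 0) = {i} := by
        rw [hτ0, hVs]
        ext p
        simp only [Set.mem_setOf_eq, Set.mem_singleton_iff]
        constructor
        · rintro ⟨f, hf0, hfp, -⟩
          rw [← hfp, hf0]
        · intro hp
          exact ⟨fun _ => i, rfl, hp.symm, by omega⟩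
      rw [h0]
      simp
    | succ l ih =>
      rcases ih with h | h
      · left
        apply Set.eq_univ_of_univ_subset
        rw [← h]
        exact hVmono _ _ (le_of_lt (hτ (lt_add_one l)))
      · by_cases hne : ((Set.univ : Set (Fin n)) \ Vs (τ l)).Nonempty
        · right
          have := Set.ncard_lt_ncard (hstep l hne) (Set.toFinite _)
          omega
        · left
          have hu : Vs (τ l) = Set.univ := by
            rw [Set.not_nonempty_iff_eq_empty, Set.diff_eq_empty] at hne
            exact Set.eq_univ_of_univ_subset hne
          apply Set.eq_univ_of_univ_subset
          rw [← hu]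
          exact hVmono _ _ (le_of_lt (hτ (lt_add_one l)))
  rcases hcard (n - 1) with h | h
  · exact h
  · have huniv : (Set.univ : Set (Fin n)).ncard = n := by
      rw [Set.ncard_univ]
      simp
    exact Set.eq_of_subset_of_ncard_le (Set.subset_univ _)
      (by rw [huniv]; omega) (Set.toFinite _)
end

section
/- Let (x_i(t)) be nonnegative reals with x_i(t+1) ≤ Σ_{j ∈ N_i(t)} w_{ij}(t) x_j(t), Σ_j w_{ij}(t) = 1, and w_{ij}(t) ≥ δ > 0 for j ∈ N_i(t). Suppose there is M ∈ ℕ such that for all sufficiently large t and all i, j, j meets i on some interval [t, t'] with t' − t ≤ M. Then every x_i(t) converges to the common limit m(∞) = lim_t max_i x_i(t). -/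
/-!
Write `m t = maxᵢ xᵢ(t)`. Each update is a convex combination, so `m` is nonincreasing and
nonnegative, hence converges. Against any bound `c ≥ m`, a deficit `c - x_j(s)` is passed on to
every `i` with `j ∈ N_i(s)` at the rate `δ`, so along a meeting path of length at most `M`
(padded with self-loops to length exactly `M`) the deficit of `j` at time `t` forces a deficit of
at least `δ^M (m t - x_j t)` at the maximiser of time `t + M`. This gives
`δ^M (m t - x_j t) ≤ m t - m (t + M) → 0`.
-/

open Filter Topology

/-- `MeetsF N i j m₁ m₂` : there is a sequence `l` with `l m₁ = i`, `l m₂ = j` and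
`l s ∈ N (l (s+1)) s` for every `s ∈ [m₁, m₂ - 1]`. -/
def MeetsF {V : Type*} (N : V → ℕ → Finset V) (i j : V) (m₁ m₂ : ℕ) : Prop :=
  ∃ l : ℕ → V, l m₁ = i ∧ l m₂ = j ∧ ∀ s, m₁ ≤ s → s < m₂ → l s ∈ N (l (s + 1)) s

open Finset

section Averaging

variable {V : Type*} {N : V → ℕ → Finset V} {w : V → V → ℕ → ℝ} {x : V → ℕ → ℝ}
  {i j : V} {t : ℕ} {c δ : ℝ}

lemma sub_weighted_sum_eq (hw1 : ∑ k ∈ N i t, w i k t = 1) (c : ℝ) :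
    c - ∑ k ∈ N i t, w i k t * x k t = ∑ k ∈ N i t, w i k t * (c - x k t) := by
  simp only [mul_sub, sum_sub_distrib, ← sum_mul, hw1, one_mul]

lemma le_of_update_of_forall_le (hw0 : ∀ k ∈ N i t, 0 ≤ w i k t)
    (hw1 : ∑ k ∈ N i t, w i k t = 1) (hupd : x i (t + 1) ≤ ∑ k ∈ N i t, w i k t * x k t)
    (hc : ∀ k ∈ N i t, x k t ≤ c) : x i (t + 1) ≤ c := by
  have : 0 ≤ c - ∑ k ∈ N i t, w i k t * x k t := by
    rw [sub_weighted_sum_eq hw1]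
    exact sum_nonneg fun k hk => mul_nonneg (hw0 k hk) (sub_nonneg.2 (hc k hk))
  linarith

lemma mul_sub_le_sub_of_update (hw0 : ∀ k ∈ N i t, 0 ≤ w i k t)
    (hw1 : ∑ k ∈ N i t, w i k t = 1) (hupd : x i (t + 1) ≤ ∑ k ∈ N i t, w i k t * x k t)
    (hc : ∀ k ∈ N i t, x k t ≤ c) (hj : j ∈ N i t) (hwδ : δ ≤ w i j t) :
    δ * (c - x j t) ≤ c - x i (t + 1) :=
  calc δ * (c - x j t) ≤ w i j t * (c - x j t) :=
        mul_le_mul_of_nonneg_right hwδ (sub_nonneg.2 (hc j hj))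
    _ ≤ ∑ k ∈ N i t, w i k t * (c - x k t) :=
        single_le_sum (f := fun k => w i k t * (c - x k t))
          (fun k hk => mul_nonneg (hw0 k hk) (sub_nonneg.2 (hc k hk))) hj
    _ = c - ∑ k ∈ N i t, w i k t * x k t := (sub_weighted_sum_eq hw1 c).symm
    _ ≤ c - x i (t + 1) := sub_le_sub_left hupd c

lemma pow_mul_sub_le_of_path (hδ : 0 ≤ δ) (hw0 : ∀ i j t, 0 ≤ w i j t)
    (hwδ : ∀ i j t, j ∈ N i t → δ ≤ w i j t) (hw1 : ∀ i t, ∑ j ∈ N i t, w i j t = 1)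
    (hupd : ∀ i t, x i (t + 1) ≤ ∑ j ∈ N i t, w i j t * x j t)
    (hc : ∀ s k, t ≤ s → x k s ≤ c) (l : ℕ → V) (n : ℕ)
    (hl : ∀ s, t ≤ s → s < t + n → l s ∈ N (l (s + 1)) s) :
    δ ^ n * (c - x (l t) t) ≤ c - x (l (t + n)) (t + n) := by
  induction n with
  | zero => simp
  | succ n ih =>
    have hlink := hl (t + n) (by omega) (by omega)
    have hstep := mul_sub_le_sub_of_update (fun k _ => hw0 _ k _) (hw1 _ _) (hupd _ _)
      (fun k _ => hc _ k (by omega)) hlink (hwδ _ _ _ hlink)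
    calc δ ^ (n + 1) * (c - x (l t) t) = δ * (δ ^ n * (c - x (l t) t)) := by ring
      _ ≤ δ * (c - x (l (t + n)) (t + n)) :=
          mul_le_mul_of_nonneg_left (ih fun s hs hsn => hl s hs (by omega)) hδ
      _ ≤ c - x (l (t + (n + 1))) (t + (n + 1)) := hstep

lemma MeetsF.pow_mul_sub_le {t' : ℕ} (h : MeetsF N j i t t') (htt' : t ≤ t') (hδ : 0 ≤ δ)
    (hw0 : ∀ i j t, 0 ≤ w i j t) (hwδ : ∀ i j t, j ∈ N i t → δ ≤ w i j t)
    (hw1 : ∀ i t, ∑ j ∈ N i t, w i j t = 1)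
    (hupd : ∀ i t, x i (t + 1) ≤ ∑ j ∈ N i t, w i j t * x j t)
    (hc : ∀ s k, t ≤ s → x k s ≤ c) :
    δ ^ (t' - t) * (c - x j t) ≤ c - x i t' := by
  obtain ⟨l, hlt, hlt', hl⟩ := h
  have hpath := pow_mul_sub_le_of_path hδ hw0 hwδ hw1 hupd hc l (t' - t)
    fun s hs hst => hl s hs (by omega)
  rwa [Nat.add_sub_cancel' htt', hlt, hlt'] at hpath

lemma MeetsF.mono_right (hself : ∀ i t, i ∈ N i t) {t' t'' : ℕ} (h : MeetsF N j i t t')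
    (htt' : t ≤ t') (ht't'' : t' ≤ t'') : MeetsF N j i t t'' := by
  obtain ⟨l, hlt, hlt', hl⟩ := h
  refine ⟨fun s => if s ≤ t' then l s else i, by simp [htt', hlt], ?_, fun s hs hs'' => ?_⟩
  · by_cases h : t'' ≤ t'
    · simp [h, le_antisymm h ht't'' ▸ hlt']
    · simp [h]
  · by_cases h : s + 1 ≤ t'
    · simpa [h, show s ≤ t' by omega] using hl s hs h
    · by_cases hst' : s = t'
      · simp [hst', hlt', hself]
      · simp [h, show ¬s ≤ t' by omega, hself]

end Averaging

section Maximum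

variable {V : Type*} [Fintype V] [Nonempty V] {N : V → ℕ → Finset V} {w : V → V → ℕ → ℝ}
  {x : V → ℕ → ℝ} {δ : ℝ}

def maxVal (x : V → ℕ → ℝ) (t : ℕ) : ℝ :=
  univ.sup' univ_nonempty fun i => x i t

lemma le_maxVal (x : V → ℕ → ℝ) (i : V) (t : ℕ) : x i t ≤ maxVal x t :=
  le_sup' (fun i => x i t) (mem_univ i)

lemma exists_eq_maxVal (x : V → ℕ → ℝ) (t : ℕ) : ∃ i, x i t = maxVal x t := by
  obtain ⟨i, -, hi⟩ := exists_mem_eq_sup' univ_nonempty fun i => x i t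
  exact ⟨i, hi.symm⟩

lemma antitone_maxVal (hw0 : ∀ i j t, 0 ≤ w i j t) (hw1 : ∀ i t, ∑ j ∈ N i t, w i j t = 1)
    (hupd : ∀ i t, x i (t + 1) ≤ ∑ j ∈ N i t, w i j t * x j t) : Antitone (maxVal x) :=
  antitone_nat_of_succ_le fun t => sup'_le _ _ fun i _ =>
    le_of_update_of_forall_le (fun k _ => hw0 i k t) (hw1 i t) (hupd i t)
      fun k _ => le_maxVal x k t

lemma pow_mul_sub_le_maxVal_sub (hself : ∀ i t, i ∈ N i t) (hδ : 0 ≤ δ)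
    (hw0 : ∀ i j t, 0 ≤ w i j t) (hwδ : ∀ i j t, j ∈ N i t → δ ≤ w i j t)
    (hw1 : ∀ i t, ∑ j ∈ N i t, w i j t = 1)
    (hupd : ∀ i t, x i (t + 1) ≤ ∑ j ∈ N i t, w i j t * x j t) {M t : ℕ}
    (hmeet : ∀ i j : V, ∃ t', t ≤ t' ∧ t' - t ≤ M ∧ MeetsF N j i t t') (j : V) :
    δ ^ M * (maxVal x t - x j t) ≤ maxVal x t - maxVal x (t + M) := by
  obtain ⟨i, hi⟩ := exists_eq_maxVal x (t + M)
  obtain ⟨t', htt', ht'M, hji⟩ := hmeet i j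
  have hpadded := hji.mono_right hself htt' (by omega : t' ≤ t + M)
  have hbound := hpadded.pow_mul_sub_le (by omega) hδ hw0 hwδ hw1 hupd
    fun s k hs => (le_maxVal x k s).trans (antitone_maxVal hw0 hw1 hupd hs)
  rwa [Nat.add_sub_cancel_left, hi] at hbound

end Maximum

lemma tendsto_of_mul_sub_le_sub {m y : ℕ → ℝ} {a C : ℝ} {M : ℕ} (hm : Tendsto m atTop (𝓝 a))
    (hC : 0 < C) (hy : ∀ t, y t ≤ m t)
    (hgap : ∀ᶠ t in atTop, C * (m t - y t) ≤ m t - m (t + M)) :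
    Tendsto y atTop (𝓝 a) := by
  have hshift : Tendsto (fun t => (m t - m (t + M)) / C) atTop (𝓝 0) := by
    simpa using (hm.sub (hm.comp (tendsto_add_atTop_nat M))).div_const C
  have hdefect : Tendsto (fun t => m t - y t) atTop (𝓝 0) :=
    tendsto_of_tendsto_of_tendsto_of_le_of_le' tendsto_const_nhds hshift
      (Eventually.of_forall fun t => sub_nonneg.2 (hy t))
      (hgap.mono fun t ht => (le_div_iff₀' hC).2 ht)
  simpa using hm.sub hdefect

theorem stmt_13_general {V : Type*} [Fintype V] [Nonempty V]
    (N : V → ℕ → Finset V) (hself : ∀ (i : V) (t : ℕ), i ∈ N i t)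
    (w : V → V → ℕ → ℝ) (δ : ℝ) (hδ : 0 < δ)
    (hw0 : ∀ i j t, 0 ≤ w i j t)
    (hwδ : ∀ i j t, j ∈ N i t → δ ≤ w i j t)
    (hw1 : ∀ i t, ∑ j ∈ N i t, w i j t = 1)
    (x : V → ℕ → ℝ) (hx0 : ∀ i t, 0 ≤ x i t)
    (hupd : ∀ i t, x i (t + 1) ≤ ∑ j ∈ N i t, w i j t * x j t)
    (M : ℕ)
    (hmeet : ∃ T : ℕ, ∀ t, T ≤ t → ∀ i j : V,
      ∃ t', t ≤ t' ∧ t' - t ≤ M ∧ MeetsF N j i t t') :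
    ∃ a : ℝ,
      Tendsto (fun t => Finset.univ.sup' Finset.univ_nonempty fun i => x i t) atTop (𝓝 a) ∧
      ∀ i : V, Tendsto (fun t => x i t) atTop (𝓝 a) := by
  obtain ⟨T, hT⟩ := hmeet
  have hbdd : BddBelow (Set.range (maxVal x)) := by
    refine ⟨0, ?_⟩
    rintro _ ⟨t, rfl⟩
    exact (hx0 (Classical.arbitrary V) t).trans (le_maxVal x _ t)
  have hlim := tendsto_atTop_ciInf (antitone_maxVal hw0 hw1 hupd) hbdd
  refine ⟨_, hlim, fun j => tendsto_of_mul_sub_le_sub (M := M) hlim (pow_pos hδ M) (le_maxVal x j) ?_⟩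
  filter_upwards [eventually_ge_atTop T] with t ht
  exact pow_mul_sub_le_maxVal_sub hself hδ.le hw0 hwδ hw1 hupd (hT t ht) j

theorem stmt_13 {V : Type*} [Fintype V] [Nonempty V]
    (N : V → ℕ → Finset V) (hself : ∀ (i : V) (t : ℕ), i ∈ N i t)
    (w : V → V → ℕ → ℝ) (δ : ℝ) (hδ : 0 < δ)
    (hw0 : ∀ i j t, 0 ≤ w i j t)
    (hwδ : ∀ i j t, j ∈ N i t → δ ≤ w i j t)
    (hwz : ∀ i j t, j ∉ N i t → w i j t = 0)
    (hw1 : ∀ i t, ∑ j ∈ N i t, w i j t = 1)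
    (x : V → ℕ → ℝ) (hx0 : ∀ i t, 0 ≤ x i t)
    (hupd : ∀ i t, x i (t + 1) ≤ ∑ j ∈ N i t, w i j t * x j t)
    (M : ℕ)
    (hmeet : ∃ T : ℕ, ∀ t, T ≤ t → ∀ i j : V,
      ∃ t', t ≤ t' ∧ t' - t ≤ M ∧ MeetsF N j i t t') :
    ∃ a : ℝ,
      Tendsto (fun t => Finset.univ.sup' Finset.univ_nonempty fun i => x i t) atTop (𝓝 a) ∧
      ∀ i : V, Tendsto (fun t => x i t) atTop (𝓝 a) :=
  stmt_13_general N hself w δ hδ hw0 hwδ hw1 x hx0 hupd M hmeet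
end
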